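/- arXiv:2604.27549 — 5 statements merged into one kernel-verified Lean document; each statement's English description precedes it below -/
import Mathlib

section
/- Let E ⊆ ℝ^n be a measurable set of finite Lebesgue measure and let p : E → ℝ be measurable with 1 < p⁻ ≤ p(x) ≤ p⁺ < ∞ for a.e. x ∈ E, where p⁻ and p⁺ are the essential infimum and supremum of p. Let p'(x) = p(x)/(p(x)−1) and let (p')⁻ be the essential infimum of p'. Then for all measurable u, v : E → ℝ with ‖u‖_{L^{p(·)}(E)} < ∞ and ‖v‖_{L^{p'(·)}(E)} < ∞ one has ∫_E |u(x) v(x)| dx ≤ (1/p⁻ + 1/(p')⁻) · ‖u‖_{L^{p(·)}(E)} · ‖v‖_{L^{p'(·)}(E)} ≤ 2 · ‖u‖_{L^{p(·)}(E)} · ‖v‖_{L^{p'(·)}(E)}. -/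
open MeasureTheory ENNReal

/-- The Luxemburg norm of `u` on `E` with variable exponent `p`,
with the convention `inf ∅ = +∞`. -/
noncomputable def luxNorm {n : ℕ} (E : Set (Fin n → ℝ)) (p u : (Fin n → ℝ) → ℝ) : ℝ≥0∞ :=
  sInf ((fun lr : ℝ => ENNReal.ofReal lr) ''
    {lr : ℝ | 0 < lr ∧ ∫⁻ x in E, ENNReal.ofReal (|u x| / lr) ^ p x ≤ 1})

theorem holder_inequality_variable_exponent {n : ℕ} (E : Set (Fin n → ℝ))
    (hE : MeasurableSet E) (hEfin : volume E < ⊤)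
    (p : (Fin n → ℝ) → ℝ) (hp : Measurable p)
    (hpinf : 1 < essInf p (volume.restrict E))
    (hpae : ∀ᵐ x ∂(volume.restrict E),
      essInf p (volume.restrict E) ≤ p x ∧ p x ≤ essSup p (volume.restrict E))
    (u v : (Fin n → ℝ) → ℝ) (hu : Measurable u) (hv : Measurable v)
    (hunorm : luxNorm E p u < ⊤)
    (hvnorm : luxNorm E (fun x => p x / (p x - 1)) v < ⊤) :
    (∫⁻ x in E, ENNReal.ofReal |u x * v x|) ≤
      ENNReal.ofReal (1 / essInf p (volume.restrict E) +
          1 / essInf (fun x => p x / (p x - 1)) (volume.restrict E)) *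
        (luxNorm E p u * luxNorm E (fun x => p x / (p x - 1)) v) ∧
    ENNReal.ofReal (1 / essInf p (volume.restrict E) +
          1 / essInf (fun x => p x / (p x - 1)) (volume.restrict E)) *
        (luxNorm E p u * luxNorm E (fun x => p x / (p x - 1)) v) ≤
      2 * (luxNorm E p u * luxNorm E (fun x => p x / (p x - 1)) v) := by
  set q : (Fin n → ℝ) → ℝ := fun x => p x / (p x - 1) with hqdef
  set A := essInf p (volume.restrict E) with hAdef
  set A' := essInf q (volume.restrict E) with hA'def
  have hApos : (0 : ℝ) < A := lt_trans one_pos hpinf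
  -- the measure is nonzero
  have hne : (volume.restrict E : Measure (Fin n → ℝ)) ≠ 0 := by
    intro h0
    have h0' : essInf p (0 : Measure (Fin n → ℝ)) = 0 := by
      rw [essInf_eq_sSup]
      have huniv : {a : ℝ | (0 : Measure (Fin n → ℝ)) {x | p x < a} = 0} = Set.univ := by
        ext a; simp
      rw [huniv, Real.sSup_univ]
    rw [hAdef, h0, h0'] at hpinf
    linarith
  haveI : (ae (volume.restrict E)).NeBot := ae_neBot.mpr hne
  -- a.e. bounds for q
  have hq1 : ∀ᵐ x ∂(volume.restrict E), 1 < q x := by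
    filter_upwards [hpae] with x hx
    have h1 : 1 < p x := lt_of_lt_of_le hpinf hx.1
    rw [hqdef]
    rw [lt_div_iff₀ (by linarith)]
    linarith
  have hqbdd : ∀ᵐ x ∂(volume.restrict E), q x ≤ A / (A - 1) := by
    filter_upwards [hpae] with x hx
    have h1 : 1 < p x := lt_of_lt_of_le hpinf hx.1
    rw [hqdef]
    rw [div_le_div_iff₀ (by linarith) (by linarith)]
    nlinarith [hx.1]
  have hbddb : Filter.IsBoundedUnder (· ≥ ·) (ae (volume.restrict E)) q :=
    ⟨1, Filter.eventually_map.mpr (hq1.mono fun x hx => hx.le)⟩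
  have hA'_le_ae : ∀ᵐ x ∂(volume.restrict E), A' ≤ q x := ae_essInf_le hbddb
  have hA'_ge1 : (1 : ℝ) ≤ A' := by
    have hcob : Filter.IsCoboundedUnder (· ≥ ·) (ae (volume.restrict E)) q :=
      Filter.isCoboundedUnder_ge_of_eventually_le _ (x := A / (A - 1)) hqbdd
    exact Filter.le_liminf_of_le hcob (hq1.mono fun x hx => hx.le)
  have hA'pos : (0 : ℝ) < A' := lt_of_lt_of_le one_pos hA'_ge1
  have h1Anonneg : (0 : ℝ) ≤ 1 / A := (one_div_pos.mpr hApos).le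
  have h1A'nonneg : (0 : ℝ) ≤ 1 / A' := (one_div_pos.mpr hA'pos).le
  have hc2 : (1 : ℝ) / A + 1 / A' ≤ 2 := by
    have h1 : 1 / A ≤ 1 := by rw [div_le_one hApos]; linarith
    have h2 : 1 / A' ≤ 1 := by rw [div_le_one hA'pos]; linarith
    linarith
  have hq_meas : Measurable q := hp.div (hp.sub measurable_const)
  -- the key inequality
  have key : ∀ a b : ℝ, 0 < a → 0 < b →
      (∫⁻ x in E, ENNReal.ofReal (|u x| / a) ^ p x) ≤ 1 →
      (∫⁻ x in E, ENNReal.ofReal (|v x| / b) ^ q x) ≤ 1 →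
      (∫⁻ x in E, ENNReal.ofReal |u x * v x|) ≤
        ENNReal.ofReal (1 / A + 1 / A') * (ENNReal.ofReal a * ENNReal.ofReal b) := by
    intro a b ha hb hmu hmv
    have hmeasu : Measurable fun x => ENNReal.ofReal (|u x| / a) ^ p x :=
      (ENNReal.measurable_ofReal.comp (hu.abs.div_const a)).pow hp
    have hmeasv : Measurable fun x => ENNReal.ofReal (|v x| / b) ^ q x :=
      (ENNReal.measurable_ofReal.comp (hv.abs.div_const b)).pow hq_meas
    have hpt : ∀ᵐ x ∂(volume.restrict E),
        ENNReal.ofReal |u x * v x| ≤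
          ENNReal.ofReal (a * b) *
            (ENNReal.ofReal (1 / A) * ENNReal.ofReal (|u x| / a) ^ p x +
             ENNReal.ofReal (1 / A') * ENNReal.ofReal (|v x| / b) ^ q x) := by
      filter_upwards [hpae, hq1, hA'_le_ae] with x hx hx1 hx2
      have hpx : 1 < p x := lt_of_lt_of_le hpinf hx.1
      have hppos : 0 < p x := lt_trans one_pos hpx
      have hqpos : 0 < q x := lt_trans one_pos hx1
      have hconj : (p x).HolderConjugate (q x) := by
        refine Real.holderConjugate_iff.mpr ⟨hpx, ?_⟩
        rw [hqdef]
        field_simp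
        ring
      have hs : (0 : ℝ) ≤ |u x| / a := div_nonneg (abs_nonneg _) ha.le
      have ht : (0 : ℝ) ≤ |v x| / b := div_nonneg (abs_nonneg _) hb.le
      have hyoung : (|u x| / a) * (|v x| / b) ≤
          (|u x| / a) ^ p x / p x + (|v x| / b) ^ q x / q x :=
        Real.young_inequality_of_nonneg hs ht hconj
      have hup : (|u x| / a) ^ p x / p x ≤ 1 / A * (|u x| / a) ^ p x := by
        rw [one_div, mul_comm, ← div_eq_mul_inv]
        exact div_le_div_of_nonneg_left (Real.rpow_nonneg hs _) hApos hx.1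
      have htp : (|v x| / b) ^ q x / q x ≤ 1 / A' * (|v x| / b) ^ q x := by
        rw [one_div, mul_comm, ← div_eq_mul_inv]
        exact div_le_div_of_nonneg_left (Real.rpow_nonneg ht _) hA'pos hx2
      have habs : |u x * v x| = a * b * ((|u x| / a) * (|v x| / b)) := by
        rw [abs_mul]
        field_simp
      have hreal : |u x * v x| ≤
          a * b * (1 / A * (|u x| / a) ^ p x + 1 / A' * (|v x| / b) ^ q x) := by
        rw [habs]
        exact mul_le_mul_of_nonneg_left (hyoung.trans (add_le_add hup htp))
          (by positivity)
      calc ENNReal.ofReal |u x * v x|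
          ≤ ENNReal.ofReal (a * b *
              (1 / A * (|u x| / a) ^ p x + 1 / A' * (|v x| / b) ^ q x)) :=
            ENNReal.ofReal_le_ofReal hreal
        _ = ENNReal.ofReal (a * b) *
              (ENNReal.ofReal (1 / A) * ENNReal.ofReal (|u x| / a) ^ p x +
               ENNReal.ofReal (1 / A') * ENNReal.ofReal (|v x| / b) ^ q x) := by
            rw [ENNReal.ofReal_mul (by positivity),
              ENNReal.ofReal_add (by positivity) (by positivity),
              ENNReal.ofReal_mul h1Anonneg, ENNReal.ofReal_mul h1A'nonneg,
              ENNReal.ofReal_rpow_of_nonneg hs hppos.le,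
              ENNReal.ofReal_rpow_of_nonneg ht hqpos.le]
    calc (∫⁻ x in E, ENNReal.ofReal |u x * v x|)
        ≤ ∫⁻ x in E, ENNReal.ofReal (a * b) *
            (ENNReal.ofReal (1 / A) * ENNReal.ofReal (|u x| / a) ^ p x +
             ENNReal.ofReal (1 / A') * ENNReal.ofReal (|v x| / b) ^ q x) :=
          lintegral_mono_ae hpt
      _ = ENNReal.ofReal (a * b) * ∫⁻ x in E,
            (ENNReal.ofReal (1 / A) * ENNReal.ofReal (|u x| / a) ^ p x +
             ENNReal.ofReal (1 / A') * ENNReal.ofReal (|v x| / b) ^ q x) :=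
          lintegral_const_mul _ ((measurable_const.mul hmeasu).add
            (measurable_const.mul hmeasv))
      _ = ENNReal.ofReal (a * b) *
            (ENNReal.ofReal (1 / A) * (∫⁻ x in E, ENNReal.ofReal (|u x| / a) ^ p x) +
             ENNReal.ofReal (1 / A') * (∫⁻ x in E, ENNReal.ofReal (|v x| / b) ^ q x)) := by
          rw [lintegral_add_left (hmeasu.const_mul _),
            lintegral_const_mul _ hmeasu, lintegral_const_mul _ hmeasv]
      _ ≤ ENNReal.ofReal (a * b) *
            (ENNReal.ofReal (1 / A) * 1 + ENNReal.ofReal (1 / A') * 1) := by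
          gcongr
      _ = ENNReal.ofReal (1 / A + 1 / A') * (ENNReal.ofReal a * ENNReal.ofReal b) := by
          rw [mul_one, mul_one, ← ENNReal.ofReal_add h1Anonneg h1A'nonneg,
            ENNReal.ofReal_mul ha.le]
          ring
  -- nonemptiness of the admissible sets
  have hSu : {lr : ℝ | 0 < lr ∧ ∫⁻ x in E, ENNReal.ofReal (|u x| / lr) ^ p x ≤ 1}.Nonempty := by
    by_contra h
    rw [Set.not_nonempty_iff_eq_empty] at h
    rw [luxNorm, h, Set.image_empty, sInf_empty] at hunorm
    exact absurd hunorm (lt_irrefl ⊤)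
  have hSv : {lr : ℝ | 0 < lr ∧ ∫⁻ x in E, ENNReal.ofReal (|v x| / lr) ^ q x ≤ 1}.Nonempty := by
    by_contra h
    rw [Set.not_nonempty_iff_eq_empty] at h
    rw [luxNorm, h, Set.image_empty, sInf_empty] at hvnorm
    exact absurd hvnorm (lt_irrefl ⊤)
  have hvne_top : luxNorm E q v ≠ ⊤ := hvnorm.ne
  have aux : ∀ {k x : ℝ≥0∞} {S : Set ℝ≥0∞}, k ≠ ⊤ → S.Nonempty →
      (∀ y ∈ S, x ≤ k * y) → x ≤ k * sInf S := by
    intro k x S hktop hS h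
    haveI : Nonempty S := hS.to_subtype
    rw [sInf_eq_iInf', ENNReal.mul_iInf' (fun ht => absurd ht hktop) fun _ => inferInstance]
    exact le_iInf fun y => h y y.2
  have hvne_top' : sInf ((fun lr : ℝ => ENNReal.ofReal lr) ''
      {lr : ℝ | 0 < lr ∧ ∫⁻ x in E, ENNReal.ofReal (|v x| / lr) ^ q x ≤ 1}) ≠ ⊤ := by
    rw [luxNorm] at hvne_top; exact hvne_top
  have goal1 : (∫⁻ x in E, ENNReal.ofReal |u x * v x|) ≤
      ENNReal.ofReal (1 / A + 1 / A') * (luxNorm E p u * luxNorm E q v) := by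
    rw [luxNorm, luxNorm]
    rw [show ∀ X Y Z : ℝ≥0∞, X * (Y * Z) = X * Z * Y from fun X Y Z => by ring]
    refine aux (ENNReal.mul_ne_top ENNReal.ofReal_ne_top hvne_top') (hSu.image _) ?_
    rintro y ⟨a, ha, rfl⟩
    rw [mul_right_comm]
    refine aux (ENNReal.mul_ne_top ENNReal.ofReal_ne_top ENNReal.ofReal_ne_top)
      (hSv.image _) ?_
    rintro z ⟨b, hb, rfl⟩
    rw [mul_assoc]
    exact key a b ha.1 hb.1 ha.2 hb.2
  refine ⟨goal1, ?_⟩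
  have hcle : ENNReal.ofReal (1 / A + 1 / A') ≤ 2 := by
    calc ENNReal.ofReal (1 / A + 1 / A') ≤ ENNReal.ofReal 2 := ENNReal.ofReal_le_ofReal hc2
      _ = 2 := ENNReal.ofReal_ofNat 2
  exact mul_le_mul_left hcle _
end

section
/- Let Ω ⊂ ℝ^N be a bounded measurable set and let p₁, p₂ : Ω → ℝ be continuous (hence bounded) functions with 1 < p₁(x) ≤ p₂(x) < ∞ for every x ∈ Ω. Then there is a constant C > 0, depending only on Ω, p₁ and p₂, such that for every measurable f : Ω → ℝ one has ‖f‖_{L^{p₁(·),∞}(Ω)} ≤ C ( ‖f‖_{L^{p₂(·),∞}(Ω)} + 1 ); in particular every f with ‖f‖_{L^{p₂(·),∞}(Ω)} < ∞ satisfies ‖f‖_{L^{p₁(·),∞}(Ω)} < ∞. -/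
open MeasureTheory ENNReal

/-- The variable-exponent weak (Marcinkiewicz) norm
`‖f‖_{L^{p(·),∞}(E)} = sup_{λ>0} λ ‖χ_{{|f|>λ}}‖_{L^{p(·)}(E)}`. -/
noncomputable def weakLuxNorm {n : ℕ} (E : Set (Fin n → ℝ)) (p f : (Fin n → ℝ) → ℝ) : ℝ≥0∞ :=
  ⨆ (l : ℝ) (_ : 0 < l),
    ENNReal.ofReal l * luxNorm E p (Set.indicator {x | l < |f x|} fun _ => 1)

/-- Key comparison: for a `{0,1}`-valued function `u`, the Luxemburg norm with the
smaller exponent is controlled by `(|Ω|+1)` times the one with the larger exponent. -/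
lemma lux_indicator_le {N : ℕ} (Ω : Set (Fin N → ℝ)) (hΩm : MeasurableSet Ω)
    (hvol : volume Ω ≠ ⊤) (p₁ p₂ u : (Fin N → ℝ) → ℝ)
    (hp : ∀ x ∈ Ω, 1 ≤ p₁ x ∧ p₁ x ≤ p₂ x)
    (hu : ∀ x, u x = 0 ∨ |u x| = 1) :
    luxNorm Ω p₁ u ≤ ENNReal.ofReal ((volume Ω).toReal + 1) * luxNorm Ω p₂ u := by
  set K : ℝ := (volume Ω).toReal + 1 with hKdef
  have hK1 : 1 ≤ K := le_add_of_nonneg_left ENNReal.toReal_nonneg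
  have hK0 : (0:ℝ) < K := lt_of_lt_of_le one_pos hK1
  -- key integral estimate
  have key : ∀ l : ℝ, 0 < l →
      (∫⁻ x in Ω, ENNReal.ofReal (|u x| / l) ^ p₂ x) ≤ 1 →
      (∫⁻ x in Ω, ENNReal.ofReal (|u x| / (K * l)) ^ p₁ x) ≤ 1 := by
    intro l hl hint
    have hstep : (∫⁻ x in Ω, ENNReal.ofReal (|u x| / (K * l)) ^ p₁ x) ≤
        ∫⁻ x in Ω, ENNReal.ofReal (1 / K) *
          (1 + ENNReal.ofReal (|u x| / l) ^ p₂ x) := by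
      refine setLIntegral_mono' hΩm (fun x hx => ?_)
      obtain ⟨hp1, hp12⟩ := hp x hx
      have hp1pos : (0:ℝ) < p₁ x := lt_of_lt_of_le one_pos hp1
      rcases hu x with h0 | h1
      · have : |u x| / (K * l) = 0 := by rw [h0, abs_zero, zero_div]
        rw [this, ENNReal.ofReal_zero, ENNReal.zero_rpow_of_pos hp1pos]
        exact zero_le
      · rw [h1]
        have hsplit : (1:ℝ) / (K * l) = (1 / K) * (1 / l) := by
          field_simp
        rw [hsplit, ENNReal.ofReal_mul (by positivity),
          ENNReal.mul_rpow_of_nonneg _ _ hp1pos.le]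
        have hfac1 : ENNReal.ofReal (1 / K) ^ p₁ x ≤ ENNReal.ofReal (1 / K) :=
          ENNReal.rpow_le_self_of_le_one
            (ENNReal.ofReal_le_one.2 (div_le_one_of_le₀ hK1 hK0.le)) hp1
        have hfac2 : ENNReal.ofReal (1 / l) ^ p₁ x ≤
            1 + ENNReal.ofReal (1 / l) ^ p₂ x := by
          rcases le_or_gt (ENNReal.ofReal (1 / l)) 1 with hb | hb
          · exact le_trans (ENNReal.rpow_le_one hb hp1pos.le) le_self_add
          · exact le_trans (ENNReal.rpow_le_rpow_of_exponent_le hb.le hp12) le_add_self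
        exact mul_le_mul' hfac1 hfac2
    refine le_trans hstep ?_
    rw [lintegral_const_mul' _ _ ENNReal.ofReal_ne_top,
      lintegral_add_left measurable_const, setLIntegral_const, one_mul]
    calc ENNReal.ofReal (1 / K) * (volume Ω + ∫⁻ x in Ω, ENNReal.ofReal (|u x| / l) ^ p₂ x)
        ≤ ENNReal.ofReal (1 / K) * (volume Ω + 1) :=
          mul_le_mul_right (add_le_add_right hint _) _
      _ = 1 := by
          have : volume Ω + 1 = ENNReal.ofReal K := by
            rw [hKdef, ENNReal.ofReal_add ENNReal.toReal_nonneg zero_le_one,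
              ENNReal.ofReal_toReal hvol, ENNReal.ofReal_one]
          rw [this, ← ENNReal.ofReal_mul (by positivity), one_div,
            inv_mul_cancel₀ hK0.ne', ENNReal.ofReal_one]
  -- conclude via the definition of the Luxemburg norms
  have hmain : ∀ t ∈ ((fun lr : ℝ => ENNReal.ofReal lr) ''
      {lr : ℝ | 0 < lr ∧ ∫⁻ x in Ω, ENNReal.ofReal (|u x| / lr) ^ p₂ x ≤ 1}),
      luxNorm Ω p₁ u ≤ ENNReal.ofReal K * t := by
    rintro t ⟨l, ⟨hl, hint⟩, rfl⟩
    have hmem : ENNReal.ofReal (K * l) ∈ ((fun lr : ℝ => ENNReal.ofReal lr) ''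
        {lr : ℝ | 0 < lr ∧ ∫⁻ x in Ω, ENNReal.ofReal (|u x| / lr) ^ p₁ x ≤ 1}) :=
      ⟨K * l, ⟨by positivity, key l hl hint⟩, rfl⟩
    calc luxNorm Ω p₁ u ≤ ENNReal.ofReal (K * l) := sInf_le hmem
      _ = ENNReal.ofReal K * ENNReal.ofReal l := ENNReal.ofReal_mul hK0.le
  have hdiv : luxNorm Ω p₁ u / ENNReal.ofReal K ≤ luxNorm Ω p₂ u := by
    refine le_sInf (fun t ht => ?_)
    rw [ENNReal.div_le_iff_le_mul (Or.inl (by simp [hK0])) (Or.inl ENNReal.ofReal_ne_top),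
      mul_comm]
    exact hmain t ht
  rw [ENNReal.div_le_iff_le_mul (Or.inl (by simp [hK0])) (Or.inl ENNReal.ofReal_ne_top)] at hdiv
  rw [mul_comm] at hdiv
  exact hdiv

theorem weak_space_embedding_variable_exponent {N : ℕ} (Ω : Set (Fin N → ℝ))
    (hΩm : MeasurableSet Ω) (hΩb : Bornology.IsBounded Ω)
    (p₁ p₂ : (Fin N → ℝ) → ℝ) (hp₁ : ContinuousOn p₁ Ω) (hp₂ : ContinuousOn p₂ Ω)
    (hple : ∀ x ∈ Ω, 1 < p₁ x ∧ p₁ x ≤ p₂ x) :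
    ∃ C : ℝ, 0 < C ∧
      (∀ f : (Fin N → ℝ) → ℝ, Measurable f →
        weakLuxNorm Ω p₁ f ≤ ENNReal.ofReal C * (weakLuxNorm Ω p₂ f + 1)) ∧
      (∀ f : (Fin N → ℝ) → ℝ, Measurable f →
        weakLuxNorm Ω p₂ f < ⊤ → weakLuxNorm Ω p₁ f < ⊤) := by
  have hvol : volume Ω ≠ ⊤ := hΩb.measure_lt_top.ne
  set K : ℝ := (volume Ω).toReal + 1 with hKdef
  have hK1 : 1 ≤ K := le_add_of_nonneg_left ENNReal.toReal_nonneg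
  have hK0 : (0:ℝ) < K := lt_of_lt_of_le one_pos hK1
  have hmain : ∀ f : (Fin N → ℝ) → ℝ,
      weakLuxNorm Ω p₁ f ≤ ENNReal.ofReal K * (weakLuxNorm Ω p₂ f + 1) := by
    intro f
    refine iSup₂_le (fun l hl => ?_)
    set u : (Fin N → ℝ) → ℝ := Set.indicator {x | l < |f x|} (fun _ => 1) with hudef
    have hu : ∀ x, u x = 0 ∨ |u x| = 1 := by
      intro x
      by_cases hx : x ∈ {x | l < |f x|}
      · right; rw [hudef, Set.indicator_of_mem hx, abs_one]
      · left; rw [hudef, Set.indicator_of_notMem hx]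
    have hlux := lux_indicator_le Ω hΩm hvol p₁ p₂ u
      (fun x hx => ⟨(hple x hx).1.le, (hple x hx).2⟩) hu
    calc ENNReal.ofReal l * luxNorm Ω p₁ u
        ≤ ENNReal.ofReal l * (ENNReal.ofReal K * luxNorm Ω p₂ u) :=
          mul_le_mul_right hlux _
      _ = ENNReal.ofReal K * (ENNReal.ofReal l * luxNorm Ω p₂ u) := by ring
      _ ≤ ENNReal.ofReal K * weakLuxNorm Ω p₂ f := by
          refine mul_le_mul_right ?_ _
          exact le_iSup₂ (f := fun (l : ℝ) (_ : 0 < l) =>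
            ENNReal.ofReal l * luxNorm Ω p₂
              (Set.indicator {x | l < |f x|} fun _ => 1)) l hl
      _ ≤ ENNReal.ofReal K * (weakLuxNorm Ω p₂ f + 1) :=
          mul_le_mul_right le_self_add _
  refine ⟨K, hK0, fun f _ => hmain f, fun f _ hf => ?_⟩
  exact lt_of_le_of_lt (hmain f)
    (ENNReal.mul_lt_top ENNReal.ofReal_lt_top (ENNReal.add_lt_top.2 ⟨hf, ENNReal.one_lt_top⟩))
end

section
/- Let Q ⊂ ℝ^{N+1} be a bounded measurable set and let s, p : Q → ℝ be continuous bounded functions with 0 < s⁻ ≤ s(z) ≤ s⁺ < ∞ and 1 < p⁻ ≤ p(z) ≤ p⁺ < ∞ for all z ∈ Q, where s⁻, s⁺ (resp. p⁻, p⁺) are the infimum and supremum of s (resp. p), and assume 1 < s(z)p(z) < ∞ for all z ∈ Q. Then there exists a constant C > 0 such that for every measurable f : Q → ℝ with ‖f‖_{L^{s⁺·p(·),∞}(Q)} < ∞ one has ‖ |f|^{s(·)} ‖_{L^{p(·),∞}(Q)} ≤ C ( ‖f‖_{L^{s⁺·p(·),∞}(Q)}^{s⁺} + 1 ), where |f|^{s(·)}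 denotes the function z ↦ |f(z)|^{s(z)}. -/
open MeasureTheory ENNReal

lemma luxNorm_mono {n : ℕ} {E : Set (Fin n → ℝ)} (hE : MeasurableSet E)
    {p u v : (Fin n → ℝ) → ℝ} (hp : ∀ x ∈ E, 0 ≤ p x)
    (h : ∀ x ∈ E, |u x| ≤ |v x|) : luxNorm E p u ≤ luxNorm E p v := by
  apply sInf_le_sInf
  apply Set.image_mono
  rintro lr ⟨hlr, hint⟩
  refine ⟨hlr, le_trans ?_ hint⟩
  refine setLIntegral_mono' hE fun x hx => ?_
  exact ENNReal.rpow_le_rpow (ENNReal.ofReal_le_ofReal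
    ((div_le_div_iff_of_pos_right hlr).2 (h x hx))) (hp x hx)

lemma sInf_rpow_image (T : Set ℝ≥0∞) {c : ℝ} (hc : 0 < c) :
    sInf ((fun a : ℝ≥0∞ => a ^ c) '' T) = sInf T ^ c := by
  rw [sInf_image]
  rw [show (sInf T) ^ c = (ENNReal.orderIsoRpow c hc) (sInf T) from rfl,
    OrderIso.map_sInf]
  rfl

lemma luxNorm_indicator_rpow {n : ℕ} {E : Set (Fin n → ℝ)} (hE : MeasurableSet E)
    {p : (Fin n → ℝ) → ℝ} (hp : ∀ x ∈ E, 0 < p x) {c : ℝ} (hc : 0 < c)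
    (B : Set (Fin n → ℝ)) :
    luxNorm E p (Set.indicator B fun _ => 1) =
      luxNorm E (fun x => c * p x) (Set.indicator B fun _ => 1) ^ c := by
  set g : (Fin n → ℝ) → ℝ := Set.indicator B fun _ => 1 with hg
  have key : ∀ μ : ℝ, 0 < μ →
      (∫⁻ x in E, ENNReal.ofReal (|g x| / μ ^ c) ^ p x)
        = ∫⁻ x in E, ENNReal.ofReal (|g x| / μ) ^ (c * p x) := by
    intro μ hμ
    refine setLIntegral_congr_fun hE (fun x hx => ?_)
    by_cases hxB : x ∈ B
    · have : g x = 1 := Set.indicator_of_mem hxB _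
      rw [this]
      rw [abs_one, ENNReal.rpow_mul]
      congr 1
      rw [one_div, one_div, ← Real.inv_rpow hμ.le,
        ENNReal.ofReal_rpow_of_pos (inv_pos.2 hμ)]
    · have : g x = 0 := Set.indicator_of_notMem hxB _
      rw [this, abs_zero, zero_div, zero_div, ENNReal.ofReal_zero,
        ENNReal.zero_rpow_of_pos (hp x hx), ENNReal.zero_rpow_of_pos
          (mul_pos hc (hp x hx))]
  unfold luxNorm
  rw [← sInf_rpow_image _ hc]
  congr 1
  ext a
  constructor
  · rintro ⟨lr, ⟨hlr, hint⟩, rfl⟩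
    have hμ : (0:ℝ) < lr ^ (1 / c) := Real.rpow_pos_of_pos hlr _
    have hμc : (lr ^ (1 / c)) ^ c = lr := by
      rw [← Real.rpow_mul hlr.le, one_div_mul_cancel hc.ne', Real.rpow_one]
    refine ⟨ENNReal.ofReal (lr ^ (1 / c)), ⟨lr ^ (1 / c), ⟨hμ, ?_⟩, rfl⟩, ?_⟩
    · rw [← key _ hμ, hμc]; exact hint
    · show ENNReal.ofReal (lr ^ (1 / c)) ^ c = ENNReal.ofReal lr
      rw [ENNReal.ofReal_rpow_of_pos hμ, hμc]
  · rintro ⟨_, ⟨μ, ⟨hμ, hint⟩, rfl⟩, rfl⟩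
    refine ⟨μ ^ c, ⟨Real.rpow_pos_of_pos hμ _, ?_⟩, ?_⟩
    · rw [key _ hμ]; exact hint
    · show ENNReal.ofReal (μ ^ c) = ENNReal.ofReal μ ^ c
      rw [ENNReal.ofReal_rpow_of_pos hμ]

theorem weak_norm_variable_power_estimate {N : ℕ} (Q : Set (Fin (N + 1) → ℝ))
    (hQm : MeasurableSet Q) (hQb : Bornology.IsBounded Q)
    (s p : (Fin (N + 1) → ℝ) → ℝ) (hs : ContinuousOn s Q) (hp : ContinuousOn p Q)
    (hsbd : ∀ z ∈ Q, sInf (s '' Q) ≤ s z ∧ s z ≤ sSup (s '' Q))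
    (hpbd : ∀ z ∈ Q, sInf (p '' Q) ≤ p z ∧ p z ≤ sSup (p '' Q))
    (hs0 : 0 < sInf (s '' Q)) (hp1 : 1 < sInf (p '' Q))
    (hsp : ∀ z ∈ Q, 1 < s z * p z) :
    ∃ C : ℝ, 0 < C ∧ ∀ f : (Fin (N + 1) → ℝ) → ℝ, Measurable f →
      weakLuxNorm Q (fun z => sSup (s '' Q) * p z) f < ⊤ →
      weakLuxNorm Q p (fun z => |f z| ^ s z) ≤
        ENNReal.ofReal C *
          (weakLuxNorm Q (fun z => sSup (s '' Q) * p z) f ^ sSup (s '' Q) + 1) := by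
  rcases Set.eq_empty_or_nonempty Q with hQe | ⟨z₀, hz₀⟩
  · exfalso
    rw [hQe, Set.image_empty, Real.sInf_empty] at hp1
    linarith
  set sP := sSup (s '' Q) with hsPdef
  set pm := sInf (p '' Q) with hpmdef
  have hsP : 0 < sP := lt_of_lt_of_le hs0 (le_trans (hsbd z₀ hz₀).1 (hsbd z₀ hz₀).2)
  have hp_pos : ∀ x ∈ Q, 0 < p x := fun x hx =>
    lt_of_lt_of_le (lt_trans one_pos hp1) (hpbd x hx).1
  have hp_one : ∀ x ∈ Q, 1 ≤ p x := fun x hx =>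
    le_trans hp1.le (hpbd x hx).1
  -- the constant: R with luxNorm Q p 1 ≤ ofReal R
  have hVlt : volume Q < ⊤ := hQb.measure_lt_top
  set V := (volume Q).toReal with hVdef
  have hV0 : 0 ≤ V := ENNReal.toReal_nonneg
  set R : ℝ := (V + 1) ^ (1 / pm) with hRdef
  have hR1 : 1 ≤ R := Real.one_le_rpow (by linarith) (by positivity)
  have hR0 : 0 < R := lt_of_lt_of_le one_pos hR1
  have hRpm : R ^ pm = V + 1 := by
    rw [hRdef, ← Real.rpow_mul (by linarith), one_div_mul_cancel
      (by positivity : pm ≠ 0), Real.rpow_one]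
  have hlux_one : luxNorm Q p (fun _ => (1:ℝ)) ≤ ENNReal.ofReal R := by
    apply sInf_le
    refine ⟨R, ⟨hR0, ?_⟩, rfl⟩
    have hint : (∫⁻ x in Q, ENNReal.ofReal (|(1:ℝ)| / R) ^ p x)
        ≤ ∫⁻ _ in Q, ENNReal.ofReal (1 / R) ^ pm := by
      refine setLIntegral_mono' hQm fun x hx => ?_
      rw [abs_one]
      refine ENNReal.rpow_le_rpow_of_exponent_ge ?_ (hpbd x hx).1
      exact ENNReal.ofReal_le_one.2 (by rw [div_le_one hR0]; linarith)
    refine le_trans hint ?_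
    rw [setLIntegral_const]
    have h1 : ENNReal.ofReal (1 / R) ^ pm = ENNReal.ofReal (1 / (V + 1)) := by
      rw [ENNReal.ofReal_rpow_of_pos (by positivity), one_div,
        Real.inv_rpow hR0.le, hRpm, one_div]
    rw [h1]
    have h2 : volume Q = ENNReal.ofReal V := by
      rw [hVdef, ENNReal.ofReal_toReal hVlt.ne]
    rw [h2, ← ENNReal.ofReal_mul (by positivity)]
    refine ENNReal.ofReal_le_one.2 ?_
    rw [div_mul_eq_mul_div, one_mul, div_le_one (by linarith)]
    linarith
  refine ⟨R + 1, by linarith, fun f hf hfA => ?_⟩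
  set A := weakLuxNorm Q (fun z => sP * p z) f with hAdef
  have hCge1 : (1:ℝ≥0∞) ≤ ENNReal.ofReal (R + 1) :=
    ENNReal.one_le_ofReal.2 (by linarith)
  set g : (Fin (N + 1) → ℝ) → ℝ := fun z => |f z| ^ s z with hg
  rw [weakLuxNorm]
  refine iSup₂_le fun l hl => ?_
  rcases lt_or_ge l 1 with h1 | h1
  · -- small l : bound by the constant
    have hmono : luxNorm Q p (Set.indicator {x | l < |g x|} fun _ => 1)
        ≤ luxNorm Q p (fun _ => (1:ℝ)) := by
      refine luxNorm_mono hQm (fun x hx => (hp_pos x hx).le) fun x hx => ?_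
      by_cases hxB : x ∈ {x | l < |g x|}
      · rw [Set.indicator_of_mem hxB]
      · rw [Set.indicator_of_notMem hxB]; simp
    calc ENNReal.ofReal l * luxNorm Q p (Set.indicator {x | l < |g x|} fun _ => 1)
        ≤ 1 * ENNReal.ofReal R :=
          mul_le_mul' (ENNReal.ofReal_le_one.2 h1.le) (hmono.trans hlux_one)
      _ ≤ ENNReal.ofReal (R + 1) * 1 := by
          rw [one_mul, mul_one]; exact ENNReal.ofReal_le_ofReal (by linarith)
      _ ≤ ENNReal.ofReal (R + 1) * (A ^ sP + 1) :=
          mul_le_mul_right (le_add_self) _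
  · -- large l
    set m : ℝ := l ^ (1 / sP) with hmdef
    have hl0 : 0 < l := hl
    have hm : 0 < m := Real.rpow_pos_of_pos hl0 _
    have hml : m ^ sP = l := by
      rw [hmdef, ← Real.rpow_mul hl0.le, one_div_mul_cancel hsP.ne', Real.rpow_one]
    -- set inclusion on Q
    have hincl : ∀ x ∈ Q, x ∈ {x | l < |g x|} → x ∈ {x | m < |f x|} := by
      intro x hx hxB
      have hsx : 0 < s x := lt_of_lt_of_le hs0 (hsbd x hx).1
      have habs : |g x| = |f x| ^ s x :=
        abs_of_nonneg (Real.rpow_nonneg (abs_nonneg _) _)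
      rw [Set.mem_setOf_eq, habs] at hxB
      have hfx1 : 1 < |f x| := by
        by_contra hcon
        push_neg at hcon
        have := Real.rpow_le_one (abs_nonneg _) hcon hsx.le
        linarith
      have h2 : |f x| ^ s x ≤ |f x| ^ sP :=
        Real.rpow_le_rpow_of_exponent_le hfx1.le (hsbd x hx).2
      have h3 : l < |f x| ^ sP := lt_of_lt_of_le hxB h2
      have h4 : m < (|f x| ^ sP) ^ (1 / sP) :=
        Real.rpow_lt_rpow hl0.le h3 (by positivity)
      rwa [← Real.rpow_mul (abs_nonneg _), mul_one_div_cancel hsP.ne',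
        Real.rpow_one] at h4
    have hmono : luxNorm Q p (Set.indicator {x | l < |g x|} fun _ => 1)
        ≤ luxNorm Q p (Set.indicator {x | m < |f x|} fun _ => 1) := by
      refine luxNorm_mono hQm (fun x hx => (hp_pos x hx).le) fun x hx => ?_
      by_cases hxB : x ∈ {x | l < |g x|}
      · rw [Set.indicator_of_mem hxB, Set.indicator_of_mem (hincl x hx hxB)]
      · rw [Set.indicator_of_notMem hxB]; simp [abs_nonneg]
    have hpow := luxNorm_indicator_rpow hQm hp_pos hsP ({x | m < |f x|})
    calc ENNReal.ofReal l * luxNorm Q p (Set.indicator {x | l < |g x|} fun _ => 1)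
        ≤ ENNReal.ofReal l * luxNorm Q p (Set.indicator {x | m < |f x|} fun _ => 1) :=
          mul_le_mul_right hmono _
      _ = (ENNReal.ofReal m *
            luxNorm Q (fun z => sP * p z) (Set.indicator {x | m < |f x|} fun _ => 1)) ^ sP := by
          rw [ENNReal.mul_rpow_of_nonneg _ _ hsP.le, hpow,
            ENNReal.ofReal_rpow_of_pos hm, hml]
      _ ≤ A ^ sP := by
          refine ENNReal.rpow_le_rpow ?_ hsP.le
          exact le_iSup₂_of_le m hm le_rfl
      _ = 1 * A ^ sP := (one_mul _).symm
      _ ≤ ENNReal.ofReal (R + 1) * (A ^ sP + 1) :=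
          mul_le_mul' hCge1 le_self_add
end

section
/- Let Q ⊂ ℝ^{N+1} be a bounded measurable set and let s, p : Q → ℝ be continuous bounded functions with 0 < s⁻ ≤ s(z) ≤ s⁺ < ∞ and 1 < p⁻ ≤ p(z) ≤ p⁺ < ∞ for all z ∈ Q. Then there exists a constant C > 0 such that for every measurable f : Q → ℝ one has ‖ χ_{{z ∈ Q : |f(z)| ≤ 1}} · |f|^{s(·)} ‖_{L^{p(·),∞}(Q)} ≤ C ( ‖f‖_{L^{s⁺·p(·),∞}(Q)}^{s⁺} + 1 ), where |f|^{s(·)} denotes the function z ↦ |f(z)|^{s(z)}. -/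
open MeasureTheory ENNReal

theorem weak_norm_power_estimate_small_part {N : ℕ} (Q : Set (Fin (N + 1) → ℝ))
    (hQm : MeasurableSet Q) (hQb : Bornology.IsBounded Q)
    (s p : (Fin (N + 1) → ℝ) → ℝ) (hs : ContinuousOn s Q) (hp : ContinuousOn p Q)
    (sm sM pm pM : ℝ) (hsm : 0 < sm) (hpm : 1 < pm)
    (hsbd : ∀ z ∈ Q, sm ≤ s z ∧ s z ≤ sM)
    (hpbd : ∀ z ∈ Q, pm ≤ p z ∧ p z ≤ pM) :
    ∃ C : ℝ, 0 < C ∧ ∀ f : (Fin (N + 1) → ℝ) → ℝ, Measurable f →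
      weakLuxNorm Q p (Set.indicator {z | |f z| ≤ 1} fun z => |f z| ^ s z) ≤
        ENNReal.ofReal C * (weakLuxNorm Q (fun z => sM * p z) f ^ sM + 1) := by
  have hμfin : volume Q < ⊤ := hQb.measure_lt_top
  set μQ : ℝ := (volume Q).toReal with hμQdef
  have hμQ0 : 0 ≤ μQ := ENNReal.toReal_nonneg
  set L : ℝ := max 1 (μQ ^ (1 / pm)) with hLdef
  have hL1 : (1 : ℝ) ≤ L := le_max_left _ _
  have hL0 : (0 : ℝ) < L := lt_of_lt_of_le one_pos hL1
  have hpm0 : (0 : ℝ) < pm := lt_trans one_pos hpm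
  have hLpm : μQ ≤ L ^ pm := by
    have h1 : (μQ ^ (1 / pm)) ^ pm = μQ := by
      rw [← Real.rpow_mul hμQ0, one_div_mul_cancel hpm0.ne', Real.rpow_one]
    exact le_trans (le_of_eq h1.symm)
      (Real.rpow_le_rpow (Real.rpow_nonneg hμQ0 _) (le_max_right _ _) hpm0.le)
  -- bound on Luxemburg norms of functions bounded by 1
  have key : ∀ u : (Fin (N + 1) → ℝ) → ℝ, (∀ x, |u x| ≤ 1) →
      luxNorm Q p u ≤ ENNReal.ofReal L := by
    intro u hu
    apply sInf_le
    refine ⟨L, ⟨hL0, ?_⟩, rfl⟩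
    have hpt : ∀ x ∈ Q, ENNReal.ofReal (|u x| / L) ^ p x ≤ ENNReal.ofReal (1 / L) ^ pm := by
      intro x hx
      have hb : ENNReal.ofReal (|u x| / L) ≤ ENNReal.ofReal (1 / L) :=
        ENNReal.ofReal_le_ofReal (by gcongr; exact hu x)
      have hb1 : ENNReal.ofReal (1 / L) ≤ 1 := by
        rw [← ENNReal.ofReal_one]
        exact ENNReal.ofReal_le_ofReal (by
          rw [div_le_one hL0]; exact hL1)
      calc ENNReal.ofReal (|u x| / L) ^ p x
          ≤ ENNReal.ofReal (1 / L) ^ p x :=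
            ENNReal.rpow_le_rpow hb (le_trans hpm0.le (hpbd x hx).1)
        _ ≤ ENNReal.ofReal (1 / L) ^ pm :=
            ENNReal.rpow_le_rpow_of_exponent_ge hb1 (hpbd x hx).1
    calc ∫⁻ x in Q, ENNReal.ofReal (|u x| / L) ^ p x
        ≤ ∫⁻ _ in Q, ENNReal.ofReal (1 / L) ^ pm := setLIntegral_mono' hQm hpt
      _ = ENNReal.ofReal (1 / L) ^ pm * volume Q := by
          rw [setLIntegral_const]
      _ = ENNReal.ofReal ((1 / L) ^ pm * μQ) := by
          rw [ENNReal.ofReal_rpow_of_nonneg (by positivity : (0:ℝ) ≤ 1 / L) hpm0.le,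
            ← ENNReal.ofReal_toReal hμfin.ne, ← ENNReal.ofReal_mul (by positivity)]
      _ ≤ 1 := by
          rw [← ENNReal.ofReal_one]
          apply ENNReal.ofReal_le_ofReal
          rw [Real.div_rpow zero_le_one hL0.le, Real.one_rpow, div_mul_eq_mul_div, one_mul,
            div_le_one (Real.rpow_pos_of_pos hL0 _)]
          exact hLpm
  -- Luxemburg norm of a function vanishing on Q is 0
  have zero_lux : ∀ u : (Fin (N + 1) → ℝ) → ℝ, (∀ x ∈ Q, u x = 0) →
      luxNorm Q p u = 0 := by
    intro u hu
    have hmem : ∀ lr : ℝ, 0 < lr → luxNorm Q p u ≤ ENNReal.ofReal lr := by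
      intro lr hlr
      apply sInf_le
      refine ⟨lr, ⟨hlr, ?_⟩, rfl⟩
      have : ∀ x ∈ Q, ENNReal.ofReal (|u x| / lr) ^ p x ≤ 0 := by
        intro x hx
        rw [hu x hx, abs_zero, zero_div, ENNReal.ofReal_zero,
          ENNReal.zero_rpow_of_pos (lt_of_lt_of_le hpm0 (hpbd x hx).1)]
      calc ∫⁻ x in Q, ENNReal.ofReal (|u x| / lr) ^ p x
          ≤ ∫⁻ _ in Q, 0 := setLIntegral_mono' hQm this
        _ = 0 := by simp
        _ ≤ 1 := zero_le
    refine le_antisymm ?_ zero_le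
    refine ENNReal.le_of_forall_pos_le_add fun ε hε _ => ?_
    calc luxNorm Q p u ≤ ENNReal.ofReal ε := hmem ε hε
      _ = (0 : ℝ≥0∞) + ε := by rw [zero_add, ENNReal.ofReal_coe_nnreal]
  refine ⟨L, hL0, fun f hf => ?_⟩
  set g : (Fin (N + 1) → ℝ) → ℝ :=
    Set.indicator {z | |f z| ≤ 1} fun z => |f z| ^ s z with hgdef
  have hg : ∀ x ∈ Q, |g x| ≤ 1 := by
    intro x hx
    by_cases hfx : |f x| ≤ 1
    · have : g x = |f x| ^ s x := Set.indicator_of_mem (show x ∈ {z | |f z| ≤ 1} from hfx) _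
      rw [this, abs_of_nonneg (Real.rpow_nonneg (abs_nonneg _) _)]
      exact Real.rpow_le_one (abs_nonneg _) hfx (le_trans hsm.le (hsbd x hx).1)
    · have : g x = 0 := Set.indicator_of_notMem (show x ∉ {z | |f z| ≤ 1} from hfx) _
      rw [this, abs_zero]; exact zero_le_one
  rw [weakLuxNorm]
  refine iSup₂_le fun l hl => ?_
  rcases lt_or_ge l 1 with hl1 | hl1
  · calc ENNReal.ofReal l * luxNorm Q p (Set.indicator {x | l < |g x|} fun _ => 1)
        ≤ ENNReal.ofReal 1 * ENNReal.ofReal L := by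
          apply mul_le_mul' (ENNReal.ofReal_le_ofReal hl1.le)
          apply key
          intro x
          by_cases hx : x ∈ {x | l < |g x|}
          · rw [Set.indicator_of_mem hx]; simp
          · rw [Set.indicator_of_notMem hx]; simp
      _ = ENNReal.ofReal L := by rw [ENNReal.ofReal_one, one_mul]
      _ = ENNReal.ofReal L * 1 := (mul_one _).symm
      _ ≤ ENNReal.ofReal L * (weakLuxNorm Q (fun z => sM * p z) f ^ sM + 1) :=
          mul_le_mul_right le_add_self _
  · have hvan : ∀ x ∈ Q, (Set.indicator {x | l < |g x|} fun _ => (1 : ℝ)) x = 0 := by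
      intro x hx
      apply Set.indicator_of_notMem
      simp only [Set.mem_setOf_eq, not_lt]
      exact le_trans (hg x hx) hl1
    rw [zero_lux _ hvan, mul_zero]
    exact zero_le
end

section
/- Let b : ℝ → ℝ be a C¹ function with b(0) = 0 and b₀ ≤ b'(s) ≤ b₁ for all s ∈ ℝ, where 0 < b₀ ≤ b₁. For ε > 0 define b_ε(r) = T_{1/ε}(b(r)) + ε·r. Let k > 0 and 0 < ε < 1/k. Then for every r ∈ ℝ with |b_ε(r)| ≤ k one has |b(r)| ≤ k, and consequently |r| ≤ k/b₀. -/
/-- The truncation function `T_k(s) = max(-k, min(k, s))`. -/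
noncomputable def trunc (k s : ℝ) : ℝ := max (-k) (min k s)

theorem approx_b_level_set_inclusion (b : ℝ → ℝ) (hb : ContDiff ℝ 1 b)
    (hb0 : b 0 = 0) (b₀ b₁ : ℝ) (hb₀ : 0 < b₀) (hb₀₁ : b₀ ≤ b₁)
    (hb' : ∀ s : ℝ, b₀ ≤ deriv b s ∧ deriv b s ≤ b₁)
    (ε k : ℝ) (hk : 0 < k) (hε : 0 < ε) (hεk : ε < 1 / k) :
    ∀ r : ℝ, |trunc (1 / ε) (b r) + ε * r| ≤ k → |b r| ≤ k ∧ |r| ≤ k / b₀ := by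
  have hdiff : Differentiable ℝ b := hb.differentiable one_ne_zero
  have hεinv : (0:ℝ) < 1 / ε := by positivity
  have hkε : k < 1 / ε := by
    rw [lt_div_iff₀ hε]
    have := (lt_div_iff₀ hk).mp hεk
    nlinarith
  have hmono : Monotone (fun s => b s - b₀ * s) := by
    apply monotone_of_deriv_nonneg
    · exact hdiff.sub ((differentiable_const b₀).mul differentiable_id)
    · intro s
      have h1 := ((hdiff s).hasDerivAt.sub ((hasDerivAt_id s).const_mul b₀)).deriv
      simp only [id] at h1
      rw [show (fun s => b s - b₀ * s) = (b - fun y => b₀ * y) from rfl, h1]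
      linarith [(hb' s).1]
  intro r h
  rcases le_or_gt 0 r with hr | hr
  · have key : b₀ * r ≤ b r := by
      have := hmono hr
      simp only [hb0] at this
      linarith
    have hbr : 0 ≤ b r := by nlinarith
    have ht : trunc (1 / ε) (b r) = max (-(1/ε)) (min (1/ε) (b r)) := rfl
    have ht0 : 0 ≤ trunc (1 / ε) (b r) := by
      rw [ht]
      exact le_max_of_le_right (le_min (le_of_lt hεinv) hbr)
    have habs : trunc (1 / ε) (b r) + ε * r ≤ k := by
      rcases abs_le.mp h with ⟨_, h2⟩
      exact h2
    have htk : trunc (1 / ε) (b r) ≤ k := by nlinarith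
    have hbk : b r ≤ k := by
      rcases le_or_gt (b r) (1/ε) with hle | hgt
      · have : trunc (1 / ε) (b r) = b r := by
          rw [ht, min_eq_right hle, max_eq_right (by linarith)]
        linarith [this ▸ htk]
      · exfalso
        have : trunc (1 / ε) (b r) = 1/ε := by
          rw [ht, min_eq_left hgt.le, max_eq_right (by linarith)]
        rw [this] at htk; linarith
    constructor
    · rw [abs_of_nonneg hbr]; exact hbk
    · rw [abs_of_nonneg hr, le_div_iff₀ hb₀]
      nlinarith
  · have key : b r ≤ b₀ * r := by
      have := hmono hr.le
      simp only [hb0] at this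
      linarith
    have hbr : b r ≤ 0 := by nlinarith
    have ht : trunc (1 / ε) (b r) = max (-(1/ε)) (min (1/ε) (b r)) := rfl
    have ht0 : trunc (1 / ε) (b r) ≤ 0 := by
      rw [ht]
      apply max_le (by linarith) (le_trans (min_le_right _ _) hbr)
    have habs : -k ≤ trunc (1 / ε) (b r) + ε * r := (abs_le.mp h).1
    have htk : -k ≤ trunc (1 / ε) (b r) := by nlinarith
    have hbk : -k ≤ b r := by
      rcases le_or_gt (-(1/ε)) (b r) with hle | hgt
      · have : trunc (1 / ε) (b r) = b r := by
          rw [ht, min_eq_right (by linarith), max_eq_right hle]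
        linarith [this ▸ htk]
      · exfalso
        have : trunc (1 / ε) (b r) = -(1/ε) := by
          rw [ht, max_eq_left]
          exact le_trans (min_le_right _ _) hgt.le
        rw [this] at htk; linarith
    constructor
    · rw [abs_of_nonpos hbr]; linarith
    · rw [abs_of_neg hr, le_div_iff₀ hb₀]
      nlinarith
end
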